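/- Let T and F be nonnegative n×n matrices with ρ(T) < 1, F ≠ 0, and T + F irreducible. Then the function s ↦ q(s) = ρ(F(I−T/s)^{-1})/s is strictly decreasing on (ρ(T), ∞), and q(s) → 0 as s → ∞. -/

import Mathlib

open Matrix Filter Topology

noncomputable def specRad {n : ℕ} (A : Matrix (Fin n) (Fin n) ℝ) : ℝ :=
  (spectralRadius ℂ (A.map Complex.ofReal)).toReal

def MatIrred {n : ℕ} (A : Matrix (Fin n) (Fin n) ℝ) : Prop :=
  ∀ i j, ∃ k : ℕ, 0 < k ∧ 0 < (A ^ k) i j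

def MatPrimitive {n : ℕ} (A : Matrix (Fin n) (Fin n) ℝ) : Prop :=
  ∃ k : ℕ, 0 < k ∧ ∀ i j, 0 < (A ^ k) i j

/-!
For `s > ρ(T)` the resolvent `B(s) = (I - T/s)⁻¹ = ∑ (T/s)^k` is entrywise nonnegative and
entrywise nonincreasing in `s`. The spectral radius is monotone on nonnegative matrices (Gelfand's
formula), so `ρ(F B(s))` is nonincreasing and bounded on `[s₀, ∞)`, whence `q(s) ≤ C / s → 0`.
Strictness comes from `ρ(F B(s)) > 0`: a cycle of `T + F` through an edge of `F` becomes, once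
cut before each `F`-edge, a cycle of `F B(s)`, so some power of `F B(s)` has a positive diagonal
entry.
-/

open scoped ENNReal

local notation "ρ" A:max => spectralRadius ℂ (Matrix.map A Complex.ofReal)

theorem Relation.TransGen.trans_reflTransGen_of_absorbs {α : Type*} {E R S : α → α → Prop}
    (hS : ∀ x y, S x y → E x y) (hR : ∀ x y z, E x y → R y z → E x z) {a b c : α}
    (hab : TransGen E a b) (hbc : ReflTransGen (fun x y => R x y ∨ S x y) b c) :
    TransGen E a c := by
  induction hbc with
  | refl => exact hab
  | tail _ hcd ih =>
    rcases hcd with hR' | hS'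
    · cases ih with
      | single h => exact .single (hR _ _ _ h hR')
      | tail h₁ h₂ => exact .tail h₁ (hR _ _ _ h₂ hR')
    · exact .tail ih (hS _ _ hS')

theorem strictAntiOn_div_self_of_antitoneOn {f : ℝ → ℝ} {S : Set ℝ} (hf : AntitoneOn f S)
    (hpos : ∀ s ∈ S, 0 < f s) (hS : ∀ s ∈ S, 0 < s) : StrictAntiOn (fun s => f s / s) S :=
  fun s₁ h₁ s₂ h₂ h₁₂ =>
    (div_lt_div_of_pos_left (hpos s₂ h₂) (hS s₁ h₁) h₁₂).trans_le
      (div_le_div_of_nonneg_right (hf h₁ h₂ h₁₂.le) (hS s₁ h₁).le)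

theorem tendsto_div_self_atTop_zero_of_antitoneOn {f : ℝ → ℝ} {a : ℝ}
    (hf : AntitoneOn f (Set.Ioi a)) (h0 : ∀ s ∈ Set.Ioi a, 0 ≤ f s) :
    Tendsto (fun s => f s / s) atTop (𝓝 0) := by
  have ha : a + 1 ∈ Set.Ioi a := lt_add_one a
  refine tendsto_of_tendsto_of_tendsto_of_le_of_le' tendsto_const_nhds
    ((tendsto_const_nhds (x := f (a + 1))).div_atTop tendsto_id) ?_ ?_
  · filter_upwards [eventually_gt_atTop a, eventually_gt_atTop 0] with s hs hs0
    exact div_nonneg (h0 s hs) hs0.le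
  · filter_upwards [eventually_ge_atTop (a + 1), eventually_gt_atTop 0] with s hs hs0
    exact div_le_div_of_nonneg_right (hf ha (ha.trans_le hs) hs) hs0.le

namespace spectrum

variable {A : Type*} [NormedRing A] [NormedAlgebra ℂ A] [CompleteSpace A]

theorem spectralRadius_pow [Nontrivial A] (a : A) (n : ℕ) :
    spectralRadius ℂ (a ^ n) = spectralRadius ℂ a ^ n := by
  refine le_antisymm ?_ (spectralRadius_pow_le' a n)
  rw [spectralRadius, spectrum.map_pow]
  refine iSup₂_le ?_
  rintro - ⟨z, hz, rfl⟩
  rw [nnnorm_pow, ENNReal.coe_pow]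
  exact pow_le_pow_left'
    (le_iSup₂ (f := fun z (_ : z ∈ spectrum ℂ a) => (‖z‖₊ : ℝ≥0∞)) z hz) n

theorem eventually_norm_pow_lt_pow {a : A} {r : ℝ}
    (h : spectralRadius ℂ a < ENNReal.ofReal r) : ∀ᶠ k in atTop, ‖a ^ k‖ < r ^ k := by
  filter_upwards [(pow_norm_pow_one_div_tendsto_nhds_spectralRadius a).eventually_lt_const h,
    eventually_ne_atTop 0] with k hk hk0
  have hr : 0 < r := ENNReal.ofReal_pos.1 (zero_le.trans_lt h)
  rw [ENNReal.ofReal_lt_ofReal_iff hr, one_div,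
    Real.rpow_inv_lt_iff_of_pos (norm_nonneg _) hr.le (by positivity)] at hk
  exact_mod_cast hk

theorem ofReal_le_spectralRadius_of_pow_le_norm_pow {a : A} {r : ℝ}
    (h : ∀ k : ℕ, r ^ k ≤ ‖a ^ k‖) : ENNReal.ofReal r ≤ spectralRadius ℂ a := by
  by_contra! hlt
  obtain ⟨k, hk⟩ := (eventually_norm_pow_lt_pow hlt).exists
  exact (h k).not_gt hk

end spectrum

namespace Matrix

section Nonnegative

variable {ι : Type*} [Fintype ι]

theorem mul_apply_mul_le_mul_apply {A B : Matrix ι ι ℝ} (hA : ∀ i j, 0 ≤ A i j)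
    (hB : ∀ i j, 0 ≤ B i j) (i l j : ι) : A i l * B l j ≤ (A * B) i j := by
  rw [mul_apply]
  exact Finset.single_le_sum (f := fun l => A i l * B l j)
    (fun l _ => mul_nonneg (hA i l) (hB l j)) (Finset.mem_univ l)

theorem mul_apply_nonneg {A B : Matrix ι ι ℝ} (hA : ∀ i j, 0 ≤ A i j)
    (hB : ∀ i j, 0 ≤ B i j) (i j : ι) : 0 ≤ (A * B) i j :=
  Finset.sum_nonneg fun l _ => mul_nonneg (hA i l) (hB l j)

variable [DecidableEq ι]

theorem pow_apply_mono {A B : Matrix ι ι ℝ} (hA : ∀ i j, 0 ≤ A i j)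
    (hAB : ∀ i j, A i j ≤ B i j) (k : ℕ) (i j : ι) : (A ^ k) i j ≤ (B ^ k) i j := by
  induction k generalizing j with
  | zero => exact le_rfl
  | succ k ih =>
    rw [pow_succ, pow_succ, mul_apply, mul_apply]
    exact Finset.sum_le_sum fun l _ =>
      mul_le_mul (ih l) (hAB l j) (hA l j) ((pow_apply_nonneg hA k i l).trans (ih l))

theorem apply_self_pow_le_pow_apply_self {A : Matrix ι ι ℝ} (hA : ∀ i j, 0 ≤ A i j) (i : ι)
    (k : ℕ) : A i i ^ k ≤ (A ^ k) i i := by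
  induction k with
  | zero => simp
  | succ k ih =>
    rw [pow_succ, pow_succ]
    exact (mul_le_mul_of_nonneg_right ih (hA i i)).trans
      (mul_apply_mul_le_mul_apply (pow_apply_nonneg hA k) hA i i i)

theorem reflTransGen_of_pow_apply_pos {A : Matrix ι ι ℝ} (hA : ∀ i j, 0 ≤ A i j) {k : ℕ}
    {i j : ι} (h : 0 < (A ^ k) i j) : Relation.ReflTransGen (fun x y => 0 < A x y) i j := by
  let := toQuiver A
  obtain ⟨⟨p, -⟩⟩ := (pow_apply_pos_iff_nonempty_path hA k i j).1 h
  clear h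
  induction p with
  | nil => exact .refl
  | cons _ e ih => exact .tail ih e.down

theorem exists_pow_apply_pos_of_transGen {A : Matrix ι ι ℝ} (hA : ∀ i j, 0 ≤ A i j)
    {i j : ι} (h : Relation.TransGen (fun x y => 0 < A x y) i j) :
    ∃ k ≠ 0, 0 < (A ^ k) i j := by
  let := toQuiver A
  suffices ∃ p : Quiver.Path i j, p.length ≠ 0 from
    let ⟨p, hp⟩ := this
    ⟨p.length, hp, (pow_apply_pos_iff_nonempty_path hA _ i j).2 ⟨p, rfl⟩⟩
  induction h with
  | single h => exact ⟨Quiver.Path.nil.cons ⟨h⟩, by simp⟩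
  | tail _ h ih => exact ⟨ih.choose.cons ⟨h⟩, by simp⟩

end Nonnegative

section LinftyOpNorm

attribute [local instance] Matrix.linftyOpNormedAddCommGroup Matrix.linftyOpNormedRing
  Matrix.linftyOpNormedAlgebra

variable {ι : Type*} [Fintype ι]

theorem linfty_opNorm_map_ofReal (A : Matrix ι ι ℝ) : ‖A.map Complex.ofReal‖ = ‖A‖ := by
  simp only [linfty_opNorm_def, map_apply, Complex.nnnorm_real]

theorem linfty_opNorm_mono {A B : Matrix ι ι ℝ} (hA : ∀ i j, 0 ≤ A i j)
    (hAB : ∀ i j, A i j ≤ B i j) : ‖A‖ ≤ ‖B‖ := by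
  simp only [linfty_opNorm_def, NNReal.coe_le_coe]
  refine Finset.sup_mono_fun fun i _ => Finset.sum_le_sum fun j _ => ?_
  rw [← NNReal.coe_le_coe, coe_nnnorm, coe_nnnorm, Real.norm_of_nonneg (hA i j),
    Real.norm_of_nonneg ((hA i j).trans (hAB i j))]
  exact hAB i j

theorem norm_apply_le_linfty_opNorm (A : Matrix ι ι ℝ) (i j : ι) : ‖A i j‖ ≤ ‖A‖ := by
  rw [← coe_nnnorm, ← coe_nnnorm, NNReal.coe_le_coe, linfty_opNNNorm_def]
  exact (Finset.single_le_sum (f := fun j => ‖A i j‖₊) (fun _ _ => zero_le)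
    (Finset.mem_univ j)).trans (Finset.le_sup (f := fun i => ∑ j, ‖A i j‖₊) (Finset.mem_univ i))

variable [DecidableEq ι]

theorem map_ofReal_pow (A : Matrix ι ι ℝ) (k : ℕ) :
    (A ^ k).map Complex.ofReal = A.map Complex.ofReal ^ k :=
  Matrix.map_pow A Complex.ofRealHom k

theorem tendsto_norm_pow_rpow_spectralRadius_map_ofReal (A : Matrix ι ι ℝ) :
    Tendsto (fun k : ℕ => ENNReal.ofReal (‖A ^ k‖ ^ (1 / k : ℝ))) atTop (𝓝 (ρ A)) := by
  simpa only [← map_ofReal_pow, linfty_opNorm_map_ofReal] using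
    spectrum.pow_norm_pow_one_div_tendsto_nhds_spectralRadius (A.map Complex.ofReal)

theorem spectralRadius_map_ofReal_mono {A B : Matrix ι ι ℝ} (hA : ∀ i j, 0 ≤ A i j)
    (hAB : ∀ i j, A i j ≤ B i j) : ρ A ≤ ρ B :=
  le_of_tendsto_of_tendsto' (tendsto_norm_pow_rpow_spectralRadius_map_ofReal A)
    (tendsto_norm_pow_rpow_spectralRadius_map_ofReal B) fun k =>
      ENNReal.ofReal_le_ofReal <| Real.rpow_le_rpow (norm_nonneg _)
        (linfty_opNorm_mono (pow_apply_nonneg hA k) (pow_apply_mono hA hAB k)) (by positivity)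

theorem spectralRadius_map_ofReal_ne_top (A : Matrix ι ι ℝ) : ρ A ≠ ⊤ := by
  cases isEmpty_or_nonempty ι
  · simp
  · exact ((spectrum.spectralRadius_le_nnnorm (A.map Complex.ofReal)).trans_lt
      ENNReal.coe_lt_top).ne

theorem spectralRadius_map_ofReal_pos_of_pow_apply_pos {A : Matrix ι ι ℝ}
    (hA : ∀ i j, 0 ≤ A i j) {r : ℕ} (hr : r ≠ 0) {i : ι} (h : 0 < (A ^ r) i i) :
    0 < ρ A := by
  have : Nonempty ι := ⟨i⟩
  have hle : ENNReal.ofReal ((A ^ r) i i) ≤ ρ A ^ r := by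
    rw [← spectrum.spectralRadius_pow, ← map_ofReal_pow]
    refine spectrum.ofReal_le_spectralRadius_of_pow_le_norm_pow fun k => ?_
    rw [← map_ofReal_pow, linfty_opNorm_map_ofReal]
    calc (A ^ r) i i ^ k ≤ ((A ^ r) ^ k) i i :=
          apply_self_pow_le_pow_apply_self (pow_apply_nonneg hA r) i k
      _ ≤ ‖((A ^ r) ^ k) i i‖ := Real.le_norm_self _
      _ ≤ ‖(A ^ r) ^ k‖ := norm_apply_le_linfty_opNorm _ i i
  refine pos_iff_ne_zero.2 fun h0 => ?_
  rw [h0, zero_pow hr] at hle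
  exact (ENNReal.ofReal_pos.2 h).ne' (le_antisymm hle zero_le)

theorem hasSum_pow_smul_inv_one_sub {T : Matrix ι ι ℝ} {s : ℝ}
    (hs : ρ T < ENNReal.ofReal s) : HasSum (fun k => (s⁻¹ • T) ^ k) (1 - s⁻¹ • T)⁻¹ := by
  obtain ⟨c, hc0, hTc, hcs⟩ := ENNReal.lt_iff_exists_real_btwn.1 hs
  have hs0 : 0 < s := ENNReal.ofReal_pos.1 (zero_le.trans_lt hcs)
  have hcs' : c / s < 1 := (div_lt_one hs0).2 ((ENNReal.ofReal_lt_ofReal_iff hs0).1 hcs)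
  have hsum : Summable fun k => (s⁻¹ • T) ^ k := by
    refine Summable.of_norm_bounded_eventually_nat
      (summable_geometric_of_lt_one (by positivity) hcs') ?_
    filter_upwards [spectrum.eventually_norm_pow_lt_pow hTc] with k hk
    rw [← map_ofReal_pow, linfty_opNorm_map_ofReal] at hk
    rw [smul_pow, norm_smul, norm_pow, Real.norm_of_nonneg (inv_nonneg.2 hs0.le), div_pow,
      div_eq_inv_mul, inv_pow]
    exact mul_le_mul_of_nonneg_left hk.le (by positivity)
  rw [Matrix.inv_eq_right_inv hsum.one_sub_mul_tsum_pow]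
  exact hsum.hasSum

end LinftyOpNorm

section Resolvent

variable {ι : Type*} [Fintype ι] [DecidableEq ι] {T : Matrix ι ι ℝ} {s : ℝ}

theorem pow_smul_apply_le_inv_one_sub_apply (hT : ∀ i j, 0 ≤ T i j)
    (hs : ρ T < ENNReal.ofReal s) (k : ℕ) (i j : ι) :
    ((s⁻¹ • T) ^ k) i j ≤ (1 - s⁻¹ • T)⁻¹ i j := by
  have hs0 : 0 < s := ENNReal.ofReal_pos.1 (zero_le.trans_lt hs)
  have hsT : ∀ i j, 0 ≤ (s⁻¹ • T) i j := fun i j => mul_nonneg (by positivity) (hT i j)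
  exact le_hasSum (Pi.hasSum.1 (Pi.hasSum.1 (hasSum_pow_smul_inv_one_sub hs) i) j) k
    fun l _ => pow_apply_nonneg hsT l i j

theorem inv_one_sub_smul_apply_nonneg (hT : ∀ i j, 0 ≤ T i j)
    (hs : ρ T < ENNReal.ofReal s) (i j : ι) : 0 ≤ (1 - s⁻¹ • T)⁻¹ i j := by
  refine le_trans ?_ (pow_smul_apply_le_inv_one_sub_apply hT hs 0 i j)
  rw [pow_zero, one_apply]
  split_ifs <;> norm_num

theorem one_le_inv_one_sub_smul_apply_self (hT : ∀ i j, 0 ≤ T i j)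
    (hs : ρ T < ENNReal.ofReal s) (i : ι) : 1 ≤ (1 - s⁻¹ • T)⁻¹ i i := by
  simpa using pow_smul_apply_le_inv_one_sub_apply hT hs 0 i i

theorem inv_one_sub_smul_apply_le_of_le (hT : ∀ i j, 0 ≤ T i j) {s₁ s₂ : ℝ}
    (hs₁ : ρ T < ENNReal.ofReal s₁) (h₁₂ : s₁ ≤ s₂) (i j : ι) :
    (1 - s₂⁻¹ • T)⁻¹ i j ≤ (1 - s₁⁻¹ • T)⁻¹ i j := by
  have hs₂ : ρ T < ENNReal.ofReal s₂ := hs₁.trans_le (ENNReal.ofReal_le_ofReal h₁₂)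
  have hs₁0 : 0 < s₁ := ENNReal.ofReal_pos.1 (zero_le.trans_lt hs₁)
  refine hasSum_le (fun k => ?_)
    (Pi.hasSum.1 (Pi.hasSum.1 (hasSum_pow_smul_inv_one_sub hs₂) i) j)
    (Pi.hasSum.1 (Pi.hasSum.1 (hasSum_pow_smul_inv_one_sub hs₁) i) j)
  simp only [smul_pow, smul_apply, smul_eq_mul]
  exact mul_le_mul_of_nonneg_right
    (pow_le_pow_left₀ (inv_nonneg.2 (hs₁0.le.trans h₁₂)) (inv_anti₀ hs₁0 h₁₂) k)
    (pow_apply_nonneg hT k i j)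

theorem inv_one_sub_smul_mul (hs : ρ T < ENNReal.ofReal s) :
    (1 - s⁻¹ • T)⁻¹ * T = s • ((1 - s⁻¹ • T)⁻¹ - 1) := by
  have hs0 : 0 < s := ENNReal.ofReal_pos.1 (zero_le.trans_lt hs)
  have h := (hasSum_pow_smul_inv_one_sub hs).summable.tsum_pow_mul_one_sub
  rw [(hasSum_pow_smul_inv_one_sub hs).tsum_eq] at h
  set B := (1 - s⁻¹ • T)⁻¹
  calc B * T = s • (B - B * (1 - s⁻¹ • T)) := by
        rw [mul_sub, mul_one, sub_sub_cancel, mul_smul_comm, smul_smul, mul_inv_cancel₀ hs0.ne',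
          one_smul]
    _ = s • (B - 1) := by rw [h]

variable {F : Matrix ι ι ℝ}

theorem spectralRadius_mul_inv_one_sub_smul_le_of_le (hT : ∀ i j, 0 ≤ T i j)
    (hF : ∀ i j, 0 ≤ F i j) {s₁ s₂ : ℝ} (hs₁ : ρ T < ENNReal.ofReal s₁) (h₁₂ : s₁ ≤ s₂) :
    ρ (F * (1 - s₂⁻¹ • T)⁻¹) ≤ ρ (F * (1 - s₁⁻¹ • T)⁻¹) := by
  have hs₂ : ρ T < ENNReal.ofReal s₂ := hs₁.trans_le (ENNReal.ofReal_le_ofReal h₁₂)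
  refine spectralRadius_map_ofReal_mono
    (mul_apply_nonneg hF (inv_one_sub_smul_apply_nonneg hT hs₂))
    fun i j => Finset.sum_le_sum fun l _ => ?_
  exact mul_le_mul_of_nonneg_left (inv_one_sub_smul_apply_le_of_le hT hs₁ h₁₂ l j) (hF i l)

theorem spectralRadius_mul_inv_one_sub_smul_pos (hT : ∀ i j, 0 ≤ T i j)
    (hF : ∀ i j, 0 ≤ F i j) (hs : ρ T < ENNReal.ofReal s) {a b : ι} (hab : 0 < F a b)
    {k : ℕ} (hba : 0 < ((T + F) ^ k) b a) : 0 < ρ (F * (1 - s⁻¹ • T)⁻¹) := by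
  have hs0 : 0 < s := ENNReal.ofReal_pos.1 (zero_le.trans_lt hs)
  set B := (1 - s⁻¹ • T)⁻¹
  have hB : ∀ i j, 0 ≤ B i j := inv_one_sub_smul_apply_nonneg hT hs
  have hM : ∀ i j, 0 ≤ (F * B) i j := mul_apply_nonneg hF hB
  have hFM (x y : ι) (h : 0 < F x y) : 0 < (F * B) x y :=
    (mul_pos h (one_pos.trans_le (one_le_inv_one_sub_smul_apply_self hT hs y))).trans_le
      (mul_apply_mul_le_mul_apply hF hB x y y)
  -- `F B T = s (F B - F) ≤ s F B`: an `F B`-edge followed by a `T`-edge is an `F B`-edge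
  have hMT (x y z : ι) (hxy : 0 < (F * B) x y) (hyz : 0 < T y z) : 0 < (F * B) x z := by
    have : (F * B) x y * T y z ≤ s * ((F * B) x z - F x z) :=
      calc (F * B) x y * T y z ≤ (F * B * T) x z := mul_apply_mul_le_mul_apply hM hT x y z
        _ = s * ((F * B) x z - F x z) := by
          rw [Matrix.mul_assoc, inv_one_sub_smul_mul hs, Matrix.mul_smul, Matrix.mul_sub,
            Matrix.mul_one, smul_apply, sub_apply, smul_eq_mul]
    nlinarith [hF x z, mul_pos hxy hyz]
  have hpath : Relation.ReflTransGen (fun x y => 0 < T x y ∨ 0 < F x y) b a := by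
    refine Relation.ReflTransGen.mono (fun x y hxy => ?_) _ _
      (reflTransGen_of_pow_apply_pos (fun i j => add_nonneg (hT i j) (hF i j)) hba)
    by_contra! h
    exact (add_apply T F x y ▸ hxy).not_ge (add_nonpos h.1 h.2)
  obtain ⟨r, hr, hpos⟩ := exists_pow_apply_pos_of_transGen hM
    (Relation.TransGen.trans_reflTransGen_of_absorbs hFM hMT (.single (hFM a b hab)) hpath)
  exact spectralRadius_map_ofReal_pos_of_pow_apply_pos hM hr hpos

end Resolvent

end Matrix

theorem q_strictAnti_and_tendsto_zero_general {n : ℕ} (T F : Matrix (Fin n) (Fin n) ℝ)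
    (hT : ∀ i j, 0 ≤ T i j) (hF : ∀ i j, 0 ≤ F i j)
    (hF0 : F ≠ 0) (hirr : MatIrred (T + F)) :
    StrictAntiOn (fun s : ℝ => specRad (F * (1 - s⁻¹ • T)⁻¹) / s)
      (Set.Ioi (specRad T)) ∧
    Filter.Tendsto (fun s : ℝ => specRad (F * (1 - s⁻¹ • T)⁻¹) / s)
      Filter.atTop (nhds 0) := by
  obtain ⟨a, b, hab⟩ : ∃ a b, 0 < F a b := by
    by_contra! h
    exact hF0 (Matrix.ext fun i j => le_antisymm (h i j) (hF i j))
  obtain ⟨k, -, hba⟩ := hirr b a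
  have hρ (s : ℝ) (hs : s ∈ Set.Ioi (specRad T)) : ρ T < ENNReal.ofReal s :=
    (ENNReal.lt_ofReal_iff_toReal_lt (spectralRadius_map_ofReal_ne_top T)).2 hs
  have hanti : AntitoneOn (fun s => specRad (F * (1 - s⁻¹ • T)⁻¹)) (Set.Ioi (specRad T)) :=
    fun s₁ h₁ _ _ h₁₂ => ENNReal.toReal_mono (spectralRadius_map_ofReal_ne_top _)
      (spectralRadius_mul_inv_one_sub_smul_le_of_le hT hF (hρ s₁ h₁) h₁₂)
  have hpos (s : ℝ) (hs : s ∈ Set.Ioi (specRad T)) :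
      0 < specRad (F * (1 - s⁻¹ • T)⁻¹) :=
    ENNReal.toReal_pos (spectralRadius_mul_inv_one_sub_smul_pos hT hF (hρ s hs) hab hba).ne'
      (spectralRadius_map_ofReal_ne_top _)
  exact ⟨strictAntiOn_div_self_of_antitoneOn hanti hpos
      fun s hs => ENNReal.toReal_nonneg.trans_lt hs,
    tendsto_div_self_atTop_zero_of_antitoneOn hanti fun _ _ => ENNReal.toReal_nonneg⟩

theorem q_strictAnti_and_tendsto_zero {n : ℕ} (T F : Matrix (Fin n) (Fin n) ℝ)
    (hT : ∀ i j, 0 ≤ T i j) (hF : ∀ i j, 0 ≤ F i j)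
    (hρ : specRad T < 1) (hF0 : F ≠ 0) (hirr : MatIrred (T + F)) :
    StrictAntiOn (fun s : ℝ => specRad (F * (1 - s⁻¹ • T)⁻¹) / s)
      (Set.Ioi (specRad T)) ∧
    Filter.Tendsto (fun s : ℝ => specRad (F * (1 - s⁻¹ • T)⁻¹) / s)
      Filter.atTop (nhds 0) :=
  q_strictAnti_and_tendsto_zero_general T F hT hF hF0 hirr
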